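/- Let p be a prime, let a, c ∈ ℚ_p^× and u ∈ ℚ_p, and set b = (a 0; a⁻¹c a⁻¹), n = (1 u; 0 1) and w = (0 −1; 1 0) in SL₂(ℚ_p). If a + u·a⁻¹·c ≠ 0, then σ(n, b) · σ(w, n·b) = (−a·c, a + u·a⁻¹·c); if a + u·a⁻¹·c = 0, then σ(n, b) · σ(w, n·b) = (u·a, u·c). In particular, in the metaplectic double cover, ⟨w, 1⟩⟨n, 1⟩⟨b, 1⟩ = ⟨w·n·b, ε⟩ with ε equal to the stated Hilbert symbol. -/

import Mathlib

/-!
Since `x(w) = x(n) = 1` and `n·b` has the same bottom row as `b`, the first factor is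
`σ(n, b) = (x(b), 1) = 1`, and the second is `σ(w, n·b) = (t, t / (a⁻¹c))`, where `t` is the
lower-left entry `a + u·a⁻¹·c` of `w·n·b` if it is nonzero and its lower-right entry `u·a⁻¹`
otherwise. In the first case `t / (a⁻¹c) = -t·(-ac)·c⁻²`, in the second `t = ua·a⁻²` and
`t / (a⁻¹c) = uc·c⁻²`, so both reduce to the stated symbols by three elementary properties of the
Hilbert symbol: symmetry, invariance under multiplying an argument by a nonzero square, and
`(t, -t·s) = (t, s)` for `t ≠ 0`.
-/

open scoped Classical

/-- The quadratic Hilbert symbol over `ℚ_p`: `1` if `z² = a·x² + b·y²` has a nonzero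
solution, `-1` otherwise. -/
noncomputable def hilbertSym (p : ℕ) [Fact p.Prime] (a b : ℚ_[p]) : ℤ :=
  if ∃ x y z : ℚ_[p], (x, y, z) ≠ (0, 0, 0) ∧ z ^ 2 = a * x ^ 2 + b * y ^ 2 then 1 else -1

/-- Kubota's function `x(g)`: the lower-left entry if nonzero, else the lower-right entry. -/
noncomputable def kubotaX (p : ℕ) [Fact p.Prime] (g : Matrix (Fin 2) (Fin 2) ℚ_[p]) : ℚ_[p] :=
  if g 1 0 ≠ 0 then g 1 0 else g 1 1

/-- Kubota's 2-cocycle on `SL₂(ℚ_p)`. -/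
noncomputable def kubota (p : ℕ) [Fact p.Prime]
    (g g' : Matrix.SpecialLinearGroup (Fin 2) ℚ_[p]) : ℤ :=
  hilbertSym p (kubotaX p ↑(g * g') / kubotaX p ↑g) (kubotaX p ↑(g * g') / kubotaX p ↑g')

/-- The lower-triangular element `b = (a 0; a⁻¹c a⁻¹)` of `SL₂(ℚ_p)`. -/
noncomputable def bMat (p : ℕ) [Fact p.Prime] (a c : ℚ_[p]) (ha : a ≠ 0) :
    Matrix.SpecialLinearGroup (Fin 2) ℚ_[p] :=
  ⟨!![a, 0; a⁻¹ * c, a⁻¹], by rw [Matrix.det_fin_two_of]; field_simp; ring⟩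

/-- The upper-unipotent element `n = (1 u; 0 1)` of `SL₂(ℚ_p)`. -/
noncomputable def nMat (p : ℕ) [Fact p.Prime] (u : ℚ_[p]) : Matrix.SpecialLinearGroup (Fin 2) ℚ_[p] :=
  ⟨!![1, u; 0, 1], by rw [Matrix.det_fin_two_of]; ring⟩

/-- The Weyl element `w = (0 −1; 1 0)` of `SL₂(ℚ_p)`. -/
noncomputable def wMat (p : ℕ) [Fact p.Prime] : Matrix.SpecialLinearGroup (Fin 2) ℚ_[p] :=
  ⟨!![0, -1; 1, 0], by rw [Matrix.det_fin_two_of]; ring⟩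

def HilbertIsotropic {K : Type*} [Field K] (a b : K) : Prop :=
  ∃ x y z : K, (x, y, z) ≠ (0, 0, 0) ∧ z ^ 2 = a * x ^ 2 + b * y ^ 2

section HilbertIsotropic

variable {K : Type*} [Field K] {a b : K}

theorem hilbertIsotropic_comm : HilbertIsotropic a b ↔ HilbertIsotropic b a := by
  constructor <;>
  · rintro ⟨x, y, z, hne, h⟩
    refine ⟨y, x, z, fun h0 => hne ?_, by linear_combination h⟩
    simp_all [Prod.ext_iff]

theorem hilbertIsotropic_one_right (a : K) : HilbertIsotropic a 1 :=
  ⟨0, 1, 1, by simp, by ring⟩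

theorem HilbertIsotropic.mul_sq_right {β : K} (hβ : β ≠ 0) (h : HilbertIsotropic a b) :
    HilbertIsotropic a (b * β ^ 2) := by
  obtain ⟨x, y, z, hne, h⟩ := h
  refine ⟨x, y / β, z, fun h0 => hne ?_, ?_⟩
  · simp_all [Prod.ext_iff]
  · field_simp
    linear_combination h

theorem hilbertIsotropic_mul_sq_right_iff {β : K} (hβ : β ≠ 0) :
    HilbertIsotropic a (b * β ^ 2) ↔ HilbertIsotropic a b := by
  refine ⟨fun h => ?_, (·.mul_sq_right hβ)⟩
  simpa [mul_assoc, ← mul_pow, hβ] using h.mul_sq_right (inv_ne_zero hβ)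

/-- `(z, y, a·x)` is a point of the new conic because `(a·x)² = a·(z² - b·y²)`. -/
theorem HilbertIsotropic.neg_mul_self (ha : a ≠ 0) (h : HilbertIsotropic a b) :
    HilbertIsotropic a (-(a * b)) := by
  obtain ⟨x, y, z, hne, h⟩ := h
  refine ⟨z, y, a * x, fun h0 => hne ?_, by linear_combination (-a) * h⟩
  simp_all [Prod.ext_iff]

theorem hilbertIsotropic_neg_mul_self_iff (ha : a ≠ 0) :
    HilbertIsotropic a (-(a * b)) ↔ HilbertIsotropic a b := by
  refine ⟨fun h => ?_, (·.neg_mul_self ha)⟩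
  have h' := h.neg_mul_self ha
  rwa [show -(a * -(a * b)) = b * a ^ 2 by ring, hilbertIsotropic_mul_sq_right_iff ha] at h'

end HilbertIsotropic

section HilbertSymbol

variable {p : ℕ} [Fact p.Prime] {a b : ℚ_[p]}

theorem hilbertSym_def (a b : ℚ_[p]) :
    hilbertSym p a b = if HilbertIsotropic a b then 1 else -1 :=
  rfl

theorem hilbertSym_congr {a' b' : ℚ_[p]} (h : HilbertIsotropic a b ↔ HilbertIsotropic a' b') :
    hilbertSym p a b = hilbertSym p a' b' := by
  simp only [hilbertSym_def, h]

theorem hilbertSym_comm : hilbertSym p a b = hilbertSym p b a :=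
  hilbertSym_congr hilbertIsotropic_comm

theorem hilbertSym_one_right (a : ℚ_[p]) : hilbertSym p a 1 = 1 :=
  if_pos (hilbertIsotropic_one_right a)

theorem hilbertSym_mul_sq_right {β : ℚ_[p]} (hβ : β ≠ 0) :
    hilbertSym p a (b * β ^ 2) = hilbertSym p a b :=
  hilbertSym_congr (hilbertIsotropic_mul_sq_right_iff hβ)

theorem hilbertSym_mul_sq {α β : ℚ_[p]} (hα : α ≠ 0) (hβ : β ≠ 0) :
    hilbertSym p (a * α ^ 2) (b * β ^ 2) = hilbertSym p a b := by
  rw [hilbertSym_mul_sq_right hβ, hilbertSym_comm, hilbertSym_mul_sq_right hα, hilbertSym_comm]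

theorem hilbertSym_neg_mul_self (ha : a ≠ 0) :
    hilbertSym p a (-(a * b)) = hilbertSym p a b :=
  hilbertSym_congr (hilbertIsotropic_neg_mul_self_iff ha)

end HilbertSymbol

section Kubota

variable {p : ℕ} [Fact p.Prime]

theorem coe_nMat (u : ℚ_[p]) : (↑(nMat p u) : Matrix (Fin 2) (Fin 2) ℚ_[p]) = !![1, u; 0, 1] :=
  rfl

theorem coe_wMat : (↑(wMat p) : Matrix (Fin 2) (Fin 2) ℚ_[p]) = !![0, -1; 1, 0] :=
  rfl

theorem coe_bMat {a c : ℚ_[p]} (ha : a ≠ 0) :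
    (↑(bMat p a c ha) : Matrix (Fin 2) (Fin 2) ℚ_[p]) = !![a, 0; a⁻¹ * c, a⁻¹] :=
  rfl

theorem kubotaX_of (A B C D : ℚ_[p]) :
    kubotaX p !![A, B; C, D] = if C ≠ 0 then C else D := by
  simp [kubotaX]

theorem kubotaX_ne_zero (g : Matrix.SpecialLinearGroup (Fin 2) ℚ_[p]) : kubotaX p ↑g ≠ 0 := by
  have hdet := g.det_coe
  rw [Matrix.det_fin_two] at hdet
  unfold kubotaX
  split_ifs with h
  · exact h
  · intro h'
    simp_all

theorem kubotaX_nMat (u : ℚ_[p]) : kubotaX p ↑(nMat p u) = 1 := by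
  rw [coe_nMat, kubotaX_of]; simp

theorem kubotaX_wMat : kubotaX p ↑(wMat p) = 1 := by
  rw [coe_wMat, kubotaX_of]; simp

/-- Left multiplication by `n` does not change the bottom row. -/
theorem kubotaX_nMat_mul (u : ℚ_[p]) (g : Matrix.SpecialLinearGroup (Fin 2) ℚ_[p]) :
    kubotaX p ↑(nMat p u * g) = kubotaX p ↑g := by
  simp [kubotaX, Matrix.SpecialLinearGroup.coe_mul, coe_nMat, Matrix.mul_apply, Fin.sum_univ_two]

theorem kubotaX_wMat_mul (g : Matrix.SpecialLinearGroup (Fin 2) ℚ_[p]) :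
    kubotaX p ↑(wMat p * g) =
      if (g : Matrix (Fin 2) (Fin 2) ℚ_[p]) 0 0 ≠ 0 then g 0 0 else g 0 1 := by
  simp [kubotaX, Matrix.SpecialLinearGroup.coe_mul, coe_wMat, Matrix.mul_apply, Fin.sum_univ_two]

theorem kubota_nMat_left (u : ℚ_[p]) (g : Matrix.SpecialLinearGroup (Fin 2) ℚ_[p]) :
    kubota p (nMat p u) g = 1 := by
  rw [kubota, kubotaX_nMat_mul, kubotaX_nMat, div_one, div_self (kubotaX_ne_zero g),
    hilbertSym_one_right]

theorem kubota_wMat_left (g : Matrix.SpecialLinearGroup (Fin 2) ℚ_[p]) :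
    kubota p (wMat p) g =
      hilbertSym p (kubotaX p ↑(wMat p * g)) (kubotaX p ↑(wMat p * g) / kubotaX p ↑g) := by
  rw [kubota, kubotaX_wMat, div_one]

theorem kubotaX_bMat {a c : ℚ_[p]} (ha : a ≠ 0) (hc : c ≠ 0) :
    kubotaX p ↑(bMat p a c ha) = a⁻¹ * c := by
  rw [coe_bMat, kubotaX_of]; simp [ha, hc]

theorem nMat_mul_bMat_apply_zero_zero (u : ℚ_[p]) {a c : ℚ_[p]} (ha : a ≠ 0) :
    (↑(nMat p u * bMat p a c ha) : Matrix (Fin 2) (Fin 2) ℚ_[p]) 0 0 = a + u * a⁻¹ * c := by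
  simp [Matrix.SpecialLinearGroup.coe_mul, coe_nMat, coe_bMat, Matrix.mul_apply, Fin.sum_univ_two,
    mul_assoc]

theorem nMat_mul_bMat_apply_zero_one (u : ℚ_[p]) {a c : ℚ_[p]} (ha : a ≠ 0) :
    (↑(nMat p u * bMat p a c ha) : Matrix (Fin 2) (Fin 2) ℚ_[p]) 0 1 = u * a⁻¹ := by
  simp [Matrix.SpecialLinearGroup.coe_mul, coe_nMat, coe_bMat, Matrix.mul_apply, Fin.sum_univ_two]

end Kubota

/-- The value of `σ(n, b)·σ(w, n·b)`, the sign `ε` with `⟨w,1⟩⟨n,1⟩⟨b,1⟩ = ⟨wnb, ε⟩` in the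
metaplectic cover: it is `(−a·c, a + u·a⁻¹·c)` if `a + u·a⁻¹·c ≠ 0`, and `(u·a, u·c)`
otherwise. -/
theorem kubota_w_n_b (p : ℕ) [Fact p.Prime] (a c : ℚ_[p]) (ha : a ≠ 0) (hc : c ≠ 0)
    (u : ℚ_[p]) :
    (a + u * a⁻¹ * c ≠ 0 →
      kubota p (nMat p u) (bMat p a c ha) * kubota p (wMat p) (nMat p u * bMat p a c ha) =
        hilbertSym p (-(a * c)) (a + u * a⁻¹ * c)) ∧
    (a + u * a⁻¹ * c = 0 →
      kubota p (nMat p u) (bMat p a c ha) * kubota p (wMat p) (nMat p u * bMat p a c ha) =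
        hilbertSym p (u * a) (u * c)) := by
  rw [kubota_nMat_left, one_mul, kubota_wMat_left, kubotaX_wMat_mul, kubotaX_nMat_mul,
    kubotaX_bMat ha hc, nMat_mul_bMat_apply_zero_zero, nMat_mul_bMat_apply_zero_one]
  set t := a + u * a⁻¹ * c
  refine ⟨fun ht => ?_, fun ht => ?_⟩
  · rw [if_pos ht]
    calc hilbertSym p t (t / (a⁻¹ * c)) = hilbertSym p t (-(t * -(a * c)) * c⁻¹ ^ 2) := by
          congr 1; field_simp
      _ = hilbertSym p (-(a * c)) t := by
          rw [hilbertSym_mul_sq_right (inv_ne_zero hc), hilbertSym_neg_mul_self ht, hilbertSym_comm]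
  · rw [if_neg (not_not.2 ht)]
    calc hilbertSym p (u * a⁻¹) (u * a⁻¹ / (a⁻¹ * c))
        = hilbertSym p (u * a * a⁻¹ ^ 2) (u * c * c⁻¹ ^ 2) := by
          congr 1 <;> field_simp
      _ = hilbertSym p (u * a) (u * c) := hilbertSym_mul_sq (inv_ne_zero ha) (inv_ne_zero hc)
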